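/- Let G = G₁ × G₂ be a Hausdorff locally compact abelian group with the product topology, where each of G₁ and G₂ is either compact, or totally disconnected, or topologically isomorphic to ℝ^n for some natural number n. If AT(G) holds (for every continuous endomorphism φ of G and every φ-invariant closed subgroup H of G, h_top(φ) = h_top(φ|_H) + h_top(φ̄_{G/H})), then AT(G₁) and AT(G₂) hold. -/

import Mathlib

open MeasureTheory Filter Topology Pointwise
open scoped ENNReal NNReal Classical

/-- The `n`-th `φ`-cotrajectory of `U`: `U ∩ φ⁻¹(U) ∩ … ∩ φ⁻⁽ⁿ⁻¹⁾(U)`. -/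
def cotraj {G : Type*} (φ : G → G) (U : Set G) (n : ℕ) : Set G :=
  ⋂ k ∈ Finset.range n, (φ^[k]) ⁻¹' U

/-- Topological entropy of a (continuous) endomorphism of a locally compact Hausdorff
additive topological group, computed with respect to Haar measure:
`h_top(φ) = sup_U limsup_n (−log μ(C_n(φ,U)))/n`, the supremum over all compact
neighborhoods `U` of `0`. -/
noncomputable def addHtop {G : Type*} [AddGroup G] [TopologicalSpace G] (φ : G → G) : ℝ≥0∞ :=
  letI : MeasurableSpace G := borel G
  haveI : BorelSpace G := ⟨rfl⟩
  if h : IsTopologicalAddGroup G ∧ T2Space G ∧ LocallyCompactSpace G then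
    haveI := h.1
    haveI := h.2.1
    haveI := h.2.2
    ⨆ U ∈ {U : Set G | IsCompact U ∧ U ∈ 𝓝 (0 : G)},
      Filter.atTop.limsup fun n : ℕ =>
        ENNReal.ofReal
          ((-Real.log ((MeasureTheory.Measure.addHaar (cotraj φ U n)).toReal)) / n)
  else 0

/-- The restriction of an endomorphism to an invariant subgroup
(junk value `0` if the subgroup is not invariant). -/
noncomputable def subHom {G : Type*} [AddGroup G] (φ : G →+ G) (H : AddSubgroup G) : H →+ H :=
  if h : H ≤ H.comap φ then (φ.domRestrict H).codRestrict H (fun x => h x.2) else 0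

/-- The endomorphism induced on the quotient by an invariant subgroup
(junk value `0` if the subgroup is not invariant). -/
noncomputable def quotHom {G : Type*} [AddCommGroup G] (φ : G →+ G) (H : AddSubgroup G) :
    G ⧸ H →+ G ⧸ H :=
  if h : H ≤ H.comap φ then QuotientAddGroup.map H H φ h else 0

/-- The Addition Theorem `AT(G)` for a topological abelian group `G`: for every continuous
endomorphism `φ` and every `φ`-invariant closed subgroup `H`,
`h_top(φ) = h_top(φ|_H) + h_top(φ̄_{G/H})`. -/
def AT (G : Type*) [AddCommGroup G] [TopologicalSpace G] : Prop :=
  ∀ (φ : G →+ G), Continuous φ → ∀ (H : AddSubgroup G), IsClosed (H : Set G) →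
    H ≤ H.comap φ →
      addHtop ⇑φ = addHtop ⇑(subHom φ H) + addHtop ⇑(quotHom φ H)

/-!
Apply `AT (A × B)` to `ψ × 0` and the closed invariant subgroup `H × 0`. Up to topological
isomorphism, its restriction to `H × 0` is `ψ|_H × 0`, and the map it induces on
`(A × B)/(H × 0) ≅ A/H × B/0` is `ψ̄ × 0`. Conjugation by a topological isomorphism preserves
`h_top`, since it transports Haar measure, which is unique up to a constant factor that
disappears in the limit. Finally `h_top(φ × 0) = h_top(φ)`: for `n ≥ 1` the cotrajectory of a
product neighbourhood `U × V` is `C_n(φ, U) × V`, and `s ↦ μ (s × V)` is a Haar measure on the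
first factor. The same argument with `0 × ψ` gives `AT B`.
-/

section Cotrajectory

variable {X : Type*}

lemma mem_cotraj {φ : X → X} {U : Set X} {n : ℕ} {x : X} :
    x ∈ cotraj φ U n ↔ ∀ k < n, φ^[k] x ∈ U := by
  simp [cotraj]

lemma cotraj_mono {φ : X → X} {U V : Set X} (h : U ⊆ V) (n : ℕ) :
    cotraj φ U n ⊆ cotraj φ V n :=
  Set.iInter₂_mono fun _ _ => Set.preimage_mono h

lemma cotraj_subset {φ : X → X} {U : Set X} {n : ℕ} (hn : 1 ≤ n) : cotraj φ U n ⊆ U :=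
  fun _ hx => mem_cotraj.1 hx 0 hn

lemma preimage_cotraj {Y : Type*} {f : X → Y} {φ : X → X} {ψ : Y → Y}
    (h : Function.Semiconj f φ ψ) (U : Set Y) (n : ℕ) :
    f ⁻¹' cotraj ψ U n = cotraj φ (f ⁻¹' U) n := by
  ext x
  simp [mem_cotraj, (h.iterate_right _ x).symm]

lemma cotraj_prodMap {Y : Type*} (φ : X → X) (ψ : Y → Y) (U : Set X) (V : Set Y) (n : ℕ) :
    cotraj (Prod.map φ ψ) (U ×ˢ V) n = cotraj φ U n ×ˢ cotraj ψ V n := by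
  ext x
  simp [mem_cotraj, Prod.map_iterate, forall_and]

lemma cotraj_zero [Zero X] {V : Set X} (hV : 0 ∈ V) {n : ℕ} (hn : 1 ≤ n) :
    cotraj (0 : X → X) V n = V := by
  refine (cotraj_subset hn).antisymm fun x hx => mem_cotraj.2 fun k _ => ?_
  cases k with
  | zero => exact hx
  | succ k => simpa [Function.iterate_succ_apply'] using hV

variable [TopologicalSpace X]

lemma cotraj_mem_nhds [Zero X] {φ : X → X} (hφ : Continuous φ) (h0 : φ 0 = 0) {U : Set X}
    (hU : U ∈ 𝓝 0) (n : ℕ) : cotraj φ U n ∈ 𝓝 0 :=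
  (biInter_finset_mem _).2 fun k _ =>
    (hφ.iterate k).continuousAt.preimage_mem_nhds (by rwa [Function.iterate_fixed h0])

lemma IsClosed.cotraj {φ : X → X} (hφ : Continuous φ) {U : Set X} (hU : IsClosed U) (n : ℕ) :
    IsClosed (cotraj φ U n) :=
  isClosed_biInter fun k _ => hU.preimage (hφ.iterate k)

end Cotrajectory

lemma limsup_ofReal_add_of_tendsto_zero {x ε : ℕ → ℝ} (hε : Tendsto ε atTop (𝓝 0)) :
    atTop.limsup (fun n => ENNReal.ofReal (x n + ε n)) =
      atTop.limsup (fun n => ENNReal.ofReal (x n)) := by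
  have key : ∀ x ε : ℕ → ℝ, Tendsto ε atTop (𝓝 0) →
      atTop.limsup (fun n => ENNReal.ofReal (x n + ε n)) ≤
        atTop.limsup (fun n => ENNReal.ofReal (x n)) := fun x ε hε =>
    calc atTop.limsup (fun n => ENNReal.ofReal (x n + ε n))
        ≤ atTop.limsup ((fun n => ENNReal.ofReal (x n)) + fun n => ENNReal.ofReal (ε n)) :=
          limsup_le_limsup (.of_forall fun _ => ENNReal.ofReal_add_le)
      _ = atTop.limsup (fun n => ENNReal.ofReal (x n)) :=
          ENNReal.limsup_add_of_right_tendsto_zero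
            (by simpa using ENNReal.tendsto_ofReal hε) _
  refine (key x ε hε).antisymm ?_
  simpa using key (fun n => x n + ε n) (fun n => -ε n) (by simpa using hε.neg)

noncomputable def entropyAt {X : Type*} [MeasurableSpace X] (μ : Measure X) (φ : X → X)
    (U : Set X) : ℝ≥0∞ :=
  atTop.limsup fun n : ℕ => ENNReal.ofReal ((-Real.log ((μ (cotraj φ U n)).toReal)) / n)

section EntropyAt

variable {G : Type*} [TopologicalSpace G] [MeasurableSpace G] {φ : G → G} {U : Set G}

lemma measure_cotraj_ne_top (μ : Measure G) [IsFiniteMeasureOnCompacts μ] (hU : IsCompact U)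
    {n : ℕ} (hn : 1 ≤ n) : μ (cotraj φ U n) ≠ ⊤ :=
  ((measure_mono (cotraj_subset hn)).trans_lt hU.measure_lt_top).ne

variable [Zero G]

lemma measure_cotraj_pos (μ : Measure G) [μ.IsOpenPosMeasure] (hφ : Continuous φ)
    (h0 : φ 0 = 0) (hU : U ∈ 𝓝 0) (n : ℕ) : 0 < μ (cotraj φ U n) :=
  μ.measure_pos_of_mem_nhds (cotraj_mem_nhds hφ h0 hU n)

lemma entropyAt_anti (μ : Measure G) [μ.IsOpenPosMeasure] [IsFiniteMeasureOnCompacts μ]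
    (hφ : Continuous φ) (h0 : φ 0 = 0) {V : Set G} (hUV : U ⊆ V) (hU : U ∈ 𝓝 0)
    (hV : IsCompact V) : entropyAt μ φ V ≤ entropyAt μ φ U := by
  refine limsup_le_limsup ?_
  filter_upwards [eventually_ge_atTop 1] with n hn
  gcongr ENNReal.ofReal (-Real.log ?_ / _)
  · exact ENNReal.toReal_pos (measure_cotraj_pos μ hφ h0 hU n).ne'
      (ne_top_of_le_ne_top (measure_cotraj_ne_top μ hV hn) (measure_mono (cotraj_mono hUV n)))
  · exact ENNReal.toReal_mono (measure_cotraj_ne_top μ hV hn) (measure_mono (cotraj_mono hUV n))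

end EntropyAt

section HaarMeasure

variable {G : Type*} [AddGroup G] [TopologicalSpace G] [IsTopologicalAddGroup G] [T2Space G]
  [LocallyCompactSpace G] [MeasurableSpace G] [BorelSpace G] {φ : G → G} {U : Set G}

/-- Two Haar measures differ by a constant factor `c` on the cotrajectories, which changes the
`n`-th term by `-log c / n → 0`. -/
lemma entropyAt_addHaar_eq (μ ν : Measure G) [μ.IsAddHaarMeasure] [ν.IsAddHaarMeasure]
    (hφ : Continuous φ) (h0 : φ 0 = 0) (hUc : IsCompact U) (hU : U ∈ 𝓝 0) :
    entropyAt ν φ U = entropyAt μ φ U := by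
  set c : ℝ≥0 := ν.addHaarScalarFactor μ
  have hc : (c : ℝ) ≠ 0 :=
    NNReal.coe_ne_zero.2 (Measure.addHaarScalarFactor_pos_of_isAddHaarMeasure ν μ).ne'
  have hterm : ∀ n ≥ 1, (-Real.log ((ν (cotraj φ U n)).toReal)) / n =
      (-Real.log ((μ (cotraj φ U n)).toReal)) / n + -Real.log c / n := by
    intro n hn
    have hclosed : IsClosed (cotraj φ U n) := hUc.isClosed.cotraj hφ n
    have hcomp : IsCompact (closure (cotraj φ U n)) := by
      rw [hclosed.closure_eq]
      exact hUc.of_isClosed_subset hclosed (cotraj_subset hn)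
    have hμ : (μ (cotraj φ U n)).toReal ≠ 0 :=
      ENNReal.toReal_ne_zero.2
        ⟨(measure_cotraj_pos μ hφ h0 hU n).ne', measure_cotraj_ne_top μ hUc hn⟩
    rw [Measure.measure_isAddInvariant_eq_smul_of_isCompact_closure ν μ hcomp,
      ENNReal.toReal_smul, NNReal.smul_def, smul_eq_mul, Real.log_mul hc hμ]
    ring
  refine (limsup_congr ?_).trans
    (limsup_ofReal_add_of_tendsto_zero (tendsto_const_div_atTop_nhds_zero_nat (-Real.log c)))
  filter_upwards [eventually_ge_atTop 1] with n hn
  rw [hterm n hn]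

end HaarMeasure

section AddHtop

variable {G : Type*} [AddGroup G] [TopologicalSpace G] [IsTopologicalAddGroup G] [T2Space G]
  [LocallyCompactSpace G]

lemma addHtop_eq_iSup [MeasurableSpace G] [BorelSpace G] (μ : Measure G) [μ.IsAddHaarMeasure]
    {φ : G → G} (hφ : Continuous φ) (h0 : φ 0 = 0) :
    addHtop φ = ⨆ U ∈ {U : Set G | IsCompact U ∧ U ∈ 𝓝 0}, entropyAt μ φ U := by
  obtain rfl : ‹MeasurableSpace G› = borel G := BorelSpace.measurable_eq
  let _ : MeasurableSpace G := borel G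
  rw [addHtop, dif_pos ⟨‹_›, ‹_›, ‹_›⟩]
  exact biSup_congr fun U hU => entropyAt_addHaar_eq μ _ hφ h0 hU.1 hU.2

variable {G' : Type*} [AddGroup G'] [TopologicalSpace G'] [IsTopologicalAddGroup G']
  [T2Space G'] [LocallyCompactSpace G']

lemma addHtop_eq_of_semiconj (e : G ≃ₜ+ G') {φ : G → G} {φ' : G' → G'} (hφ : Continuous φ)
    (h0 : φ 0 = 0) (h : Function.Semiconj e φ φ') : addHtop φ' = addHtop φ := by
  borelize G G'
  have hφ'_eq : φ' = e ∘ φ ∘ e.symm := funext fun y => by simpa using (h (e.symm y)).symm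
  have hφ'c : Continuous φ' := hφ'_eq ▸ e.continuous.comp (hφ.comp e.symm.continuous)
  have h0' : φ' 0 = 0 := by simp [hφ'_eq, h0]
  set μ : Measure G := Measure.addHaar
  have hmap : ∀ s, μ.map e s = μ (e ⁻¹' s) := e.toHomeomorph.toMeasurableEquiv.map_apply
  have hent : ∀ U : Set G', entropyAt (μ.map e) φ' U = entropyAt μ φ (e ⁻¹' U) := fun U => by
    simp only [entropyAt, hmap, preimage_cotraj h]
  rw [addHtop_eq_iSup (μ.map e) hφ'c h0', addHtop_eq_iSup μ hφ h0]
  apply le_antisymm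
  · refine iSup₂_le fun U hU => ?_
    rw [hent]
    exact le_iSup₂_of_le (e ⁻¹' U) ⟨e.toHomeomorph.isCompact_preimage.2 hU.1,
      e.continuous.continuousAt.preimage_mem_nhds (by simpa using hU.2)⟩ le_rfl
  · refine iSup₂_le fun V hV => le_iSup₂_of_le (e.symm ⁻¹' V) ⟨?_, ?_⟩ ?_
    · exact e.symm.toHomeomorph.isCompact_preimage.2 hV.1
    · exact e.symm.continuous.continuousAt.preimage_mem_nhds (by simpa using hV.2)
    · rw [hent, ← Set.preimage_comp, e.symm_comp_self, Set.preimage_id]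

end AddHtop

section Product

variable {A B : Type*} [TopologicalSpace A] [TopologicalSpace B]

lemma map_fst_restrict_prod_apply [MeasurableSpace A] [BorelSpace A] [MeasurableSpace (A × B)]
    [BorelSpace (A × B)] (μ : Measure (A × B)) (V : Set B) {s : Set A} (hs : MeasurableSet s) :
    (μ.restrict (Set.univ ×ˢ V)).map Prod.fst s = μ (s ×ˢ V) := by
  rw [Measure.map_apply continuous_fst.measurable hs,
    Measure.restrict_apply (continuous_fst.measurable hs), Set.univ_prod, Set.prod_eq]

variable [AddGroup A] [IsTopologicalAddGroup A] [T2Space A] [AddGroup B] [IsTopologicalAddGroup B]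

lemma isAddHaarMeasure_map_fst_restrict_prod [MeasurableSpace A] [BorelSpace A]
    [MeasurableSpace (A × B)] [BorelSpace (A × B)] (μ : Measure (A × B)) [μ.IsAddHaarMeasure]
    {V : Set B} (hV : IsCompact V) (hV0 : (interior V).Nonempty) :
    ((μ.restrict (Set.univ ×ˢ V)).map Prod.fst).IsAddHaarMeasure where
  lt_top_of_isCompact K hK := by
    rw [map_fst_restrict_prod_apply μ V hK.measurableSet]
    exact (hK.prod hV).measure_lt_top
  map_add_left_eq_self a := by
    ext s hs
    have hpre : ((a + ·) ⁻¹' s) ×ˢ V = ((a, 0) + ·) ⁻¹' (s ×ˢ V) := by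
      ext ⟨x, y⟩
      simp
    rw [Measure.map_apply (continuous_const_add a).measurable hs,
      map_fst_restrict_prod_apply μ V (hs.preimage (continuous_const_add a).measurable),
      map_fst_restrict_prod_apply μ V hs, hpre, measure_preimage_add]
  open_pos o ho hne := by
    rw [map_fst_restrict_prod_apply μ V ho.measurableSet]
    exact ((ho.prod isOpen_interior).measure_ne_zero μ (hne.prod hV0)).bot_lt.trans_le
      (measure_mono (Set.prod_mono le_rfl interior_subset)) |>.ne'

variable [LocallyCompactSpace A]

lemma entropyAt_prodMap_zero [MeasurableSpace A] [BorelSpace A] [MeasurableSpace (A × B)]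
    [BorelSpace (A × B)] (μ : Measure (A × B)) [μ.IsAddHaarMeasure] (μA : Measure A)
    [μA.IsAddHaarMeasure] {φ : A → A} (hφ : Continuous φ) (h0 : φ 0 = 0) {U : Set A}
    (hUc : IsCompact U) (hU : U ∈ 𝓝 0) {V : Set B} (hVc : IsCompact V) (hV : V ∈ 𝓝 0) :
    entropyAt μ (Prod.map φ 0) (U ×ˢ V) = entropyAt μA φ U := by
  have := isAddHaarMeasure_map_fst_restrict_prod μ hVc ⟨0, mem_interior_iff_mem_nhds.2 hV⟩
  calc entropyAt μ (Prod.map φ 0) (U ×ˢ V)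
      = entropyAt ((μ.restrict (Set.univ ×ˢ V)).map Prod.fst) φ U := by
        refine limsup_congr ?_
        filter_upwards [eventually_ge_atTop 1] with n hn
        rw [cotraj_prodMap, cotraj_zero (mem_of_mem_nhds hV) hn,
          map_fst_restrict_prod_apply μ V (hUc.isClosed.cotraj hφ n).measurableSet]
    _ = entropyAt μA φ U := entropyAt_addHaar_eq μA _ hφ h0 hUc hU

variable [T2Space B] [LocallyCompactSpace B]

/-- Every compact neighbourhood of `0` in `A × B` contains a product of compact neighbourhoods,
whose entropy is that of its first factor since the second coordinate is sent to `0`. -/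
lemma addHtop_prodMap_zero {φ : A → A} (hφ : Continuous φ) (h0 : φ 0 = 0) :
    addHtop (Prod.map φ (0 : B → B)) = addHtop φ := by
  borelize A (A × B)
  set μ : Measure (A × B) := Measure.addHaar
  set μA : Measure A := Measure.addHaar
  have hΦ : Continuous (Prod.map φ (0 : B → B)) := hφ.prodMap continuous_const
  have hΦ0 : Prod.map φ (0 : B → B) 0 = 0 := Prod.ext h0 rfl
  rw [addHtop_eq_iSup μ hΦ hΦ0, addHtop_eq_iSup μA hφ h0]
  apply le_antisymm
  · refine iSup₂_le fun W hW => ?_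
    obtain ⟨U', hU', V', hV', hUVW⟩ := mem_nhds_prod_iff.1 hW.2
    obtain ⟨U, hU, hUU', hUc⟩ := local_compact_nhds hU'
    obtain ⟨V, hV, hVV', hVc⟩ := local_compact_nhds hV'
    calc entropyAt μ (Prod.map φ 0) W
        ≤ entropyAt μ (Prod.map φ 0) (U ×ˢ V) :=
          entropyAt_anti μ hΦ hΦ0 ((Set.prod_mono hUU' hVV').trans hUVW) (prod_mem_nhds hU hV)
            hW.1
      _ = entropyAt μA φ U := entropyAt_prodMap_zero μ μA hφ h0 hUc hU hVc hV
      _ ≤ _ := le_iSup₂_of_le U ⟨hUc, hU⟩ le_rfl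
  · obtain ⟨V, hVc, hV⟩ := exists_compact_mem_nhds (0 : B)
    refine iSup₂_le fun U hU => le_iSup₂_of_le (U ×ˢ V) ⟨hU.1.prod hVc, prod_mem_nhds hU.2 hV⟩ ?_
    rw [entropyAt_prodMap_zero μ μA hφ h0 hU.1 hU.2 hVc hV]

def ContinuousAddEquiv.prodComm : A × B ≃ₜ+ B × A where
  __ := AddEquiv.prodComm
  continuous_toFun := continuous_swap
  continuous_invFun := continuous_swap

lemma addHtop_zero_prodMap {φ : A → A} (hφ : Continuous φ) (h0 : φ 0 = 0) :
    addHtop (Prod.map (0 : B → B) φ) = addHtop φ :=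
  (addHtop_eq_of_semiconj (φ := Prod.map φ (0 : B → B)) ContinuousAddEquiv.prodComm
    (hφ.prodMap continuous_const) (Prod.ext h0 rfl) fun _ => rfl).trans
    (addHtop_prodMap_zero hφ h0)

end Product

section InducedMaps

variable {G : Type*}

lemma subHom_apply [AddGroup G] {φ : G →+ G} {H : AddSubgroup G} (h : H ≤ H.comap φ) (x : H) :
    (subHom φ H x : G) = φ x := by
  rw [subHom, dif_pos h]
  rfl

lemma subHom_zero [AddGroup G] (H : AddSubgroup G) : subHom 0 H = 0 := by
  ext x
  exact subHom_apply (fun _ _ => AddSubgroup.mem_comap.2 H.zero_mem) x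

lemma continuous_subHom [AddGroup G] [TopologicalSpace G] {φ : G →+ G} (hφ : Continuous φ)
    (H : AddSubgroup G) : Continuous (subHom φ H) := by
  by_cases h : H ≤ H.comap φ
  · rw [subHom, dif_pos h]
    exact (hφ.comp continuous_subtype_val).subtype_mk _
  · rw [subHom, dif_neg h]
    exact continuous_const

lemma quotHom_mk [AddCommGroup G] {φ : G →+ G} {H : AddSubgroup G} (h : H ≤ H.comap φ) (x : G) :
    quotHom φ H x = φ x := by
  rw [quotHom, dif_pos h]
  rfl

lemma quotHom_zero [AddCommGroup G] (H : AddSubgroup G) : quotHom 0 H = 0 := by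
  ext x
  exact quotHom_mk (fun _ _ => AddSubgroup.mem_comap.2 H.zero_mem) x

lemma continuous_quotHom [AddCommGroup G] [TopologicalSpace G] {φ : G →+ G}
    (hφ : Continuous φ) (H : AddSubgroup G) : Continuous (quotHom φ H) := by
  by_cases h : H ≤ H.comap φ
  · rw [quotHom, dif_pos h]
    exact QuotientAddGroup.isQuotientMap_mk H |>.continuous_iff.2
      (QuotientAddGroup.continuous_mk.comp hφ)
  · rw [quotHom, dif_neg h]
    exact continuous_const

end InducedMaps

section ProductSubgroups

variable {A B : Type*}

lemma AddSubgroup.prod_le_comap_prodMap [AddGroup A] [AddGroup B] {ψ : A →+ A} {χ : B →+ B}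
    {H : AddSubgroup A} {K : AddSubgroup B} (hH : H ≤ H.comap ψ) (hK : K ≤ K.comap χ) :
    H.prod K ≤ (H.prod K).comap (ψ.prodMap χ) :=
  fun _ hx => ⟨hH hx.1, hK hx.2⟩

variable [TopologicalSpace A] [TopologicalSpace B]

def AddSubgroup.prodContinuousAddEquiv [AddGroup A] [AddGroup B] (H : AddSubgroup A)
    (K : AddSubgroup B) : H.prod K ≃ₜ+ H × K where
  __ := AddSubgroup.prodEquiv H K
  continuous_toFun := (Homeomorph.Set.prod (H : Set A) (K : Set B)).continuous
  continuous_invFun := (Homeomorph.Set.prod (H : Set A) (K : Set B)).symm.continuous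

def QuotientAddGroup.prodContinuousAddEquiv [AddCommGroup A] [IsTopologicalAddGroup A]
    [AddCommGroup B] [IsTopologicalAddGroup B] (H : AddSubgroup A) (K : AddSubgroup B) :
    (A × B) ⧸ H.prod K ≃ₜ+ (A ⧸ H) × (B ⧸ K) where
  __ := QuotientAddGroup.prodAddEquiv H K
  continuous_toFun := (QuotientAddGroup.isQuotientMap_mk _).continuous_iff.2 <|
    QuotientAddGroup.continuous_mk.prodMap QuotientAddGroup.continuous_mk
  continuous_invFun := (QuotientAddGroup.isOpenQuotientMap_mk.prodMap
    QuotientAddGroup.isOpenQuotientMap_mk).isQuotientMap.continuous_iff.2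
    QuotientAddGroup.continuous_mk

end ProductSubgroups

section ProductAT

variable {A B : Type*}
  [AddCommGroup A] [TopologicalSpace A] [IsTopologicalAddGroup A] [LocallyCompactSpace A]
  [AddCommGroup B] [TopologicalSpace B] [IsTopologicalAddGroup B] [LocallyCompactSpace B]
  {ψ : A →+ A} {χ : B →+ B} {H : AddSubgroup A} {K : AddSubgroup B}

lemma addHtop_quotHom_prodMap (hψ : Continuous ψ) (hχ : Continuous χ) (hHc : IsClosed (H : Set A))
    (hKc : IsClosed (K : Set B)) (hH : H ≤ H.comap ψ) (hK : K ≤ K.comap χ) :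
    addHtop (quotHom (ψ.prodMap χ) (H.prod K)) =
      addHtop (Prod.map (quotHom ψ H) (quotHom χ K)) := by
  have : IsClosed (H : Set A) := hHc
  have : IsClosed (K : Set B) := hKc
  have : IsClosed ((H.prod K : AddSubgroup (A × B)) : Set (A × B)) := hHc.prod hKc
  refine (addHtop_eq_of_semiconj (QuotientAddGroup.prodContinuousAddEquiv H K)
    (continuous_quotHom (hψ.prodMap hχ) _) (map_zero _) fun q => ?_).symm
  induction q using QuotientAddGroup.induction_on with | H x => ?_
  rw [quotHom_mk (AddSubgroup.prod_le_comap_prodMap hH hK)]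
  exact Prod.ext (quotHom_mk hH x.1).symm (quotHom_mk hK x.2).symm

variable [T2Space A] [T2Space B]

lemma addHtop_subHom_prodMap (hψ : Continuous ψ) (hχ : Continuous χ) (hHc : IsClosed (H : Set A))
    (hKc : IsClosed (K : Set B)) (hH : H ≤ H.comap ψ) (hK : K ≤ K.comap χ) :
    addHtop (subHom (ψ.prodMap χ) (H.prod K)) = addHtop (Prod.map (subHom ψ H) (subHom χ K)) := by
  have := hHc.locallyCompactSpace
  have := hKc.locallyCompactSpace
  have : LocallyCompactSpace (H.prod K) := (hHc.prod hKc).locallyCompactSpace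
  refine (addHtop_eq_of_semiconj (AddSubgroup.prodContinuousAddEquiv H K)
    (continuous_subHom (hψ.prodMap hχ) _) (map_zero _) fun x => ?_).symm
  have hx := subHom_apply (AddSubgroup.prod_le_comap_prodMap hH hK) x
  ext
  · exact (congrArg Prod.fst hx).trans (subHom_apply hH (H.prodContinuousAddEquiv K x).1).symm
  · exact (congrArg Prod.snd hx).trans (subHom_apply hK (H.prodContinuousAddEquiv K x).2).symm

lemma AT.prodMap (h : AT (A × B)) (hψ : Continuous ψ) (hχ : Continuous χ)
    (hHc : IsClosed (H : Set A)) (hKc : IsClosed (K : Set B)) (hH : H ≤ H.comap ψ)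
    (hK : K ≤ K.comap χ) :
    addHtop (Prod.map ψ χ) = addHtop (Prod.map (subHom ψ H) (subHom χ K)) +
      addHtop (Prod.map (quotHom ψ H) (quotHom χ K)) := by
  have key := h (ψ.prodMap χ) (hψ.prodMap hχ) (H.prod K) (hHc.prod hKc)
    (AddSubgroup.prod_le_comap_prodMap hH hK)
  rwa [addHtop_subHom_prodMap hψ hχ hHc hKc hH hK, addHtop_quotHom_prodMap hψ hχ hHc hKc hH hK,
    AddMonoidHom.coe_prodMap] at key

lemma AT.fst (h : AT (A × B)) : AT A := by
  intro ψ hψ H hHc hH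
  have := hHc.locallyCompactSpace
  have hbot : IsClosed ((⊥ : AddSubgroup B) : Set B) := by simp
  have := hbot.locallyCompactSpace
  have key := h.prodMap (χ := 0) hψ continuous_const hHc hbot hH bot_le
  rw [subHom_zero, quotHom_zero] at key
  calc addHtop ψ = addHtop (Prod.map ψ (0 : B → B)) := (addHtop_prodMap_zero hψ (map_zero ψ)).symm
    _ = addHtop (Prod.map (subHom ψ H) 0) + addHtop (Prod.map (quotHom ψ H) 0) := key
    _ = addHtop (subHom ψ H) + addHtop (quotHom ψ H) := by
      rw [addHtop_prodMap_zero (continuous_subHom hψ H) (map_zero _),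
        addHtop_prodMap_zero (continuous_quotHom hψ H) (map_zero _)]

lemma AT.snd (h : AT (A × B)) : AT B := by
  intro χ hχ K hKc hK
  have := hKc.locallyCompactSpace
  have hbot : IsClosed ((⊥ : AddSubgroup A) : Set A) := by simp
  have := hbot.locallyCompactSpace
  have key := h.prodMap (ψ := 0) continuous_const hχ hbot hKc bot_le hK
  rw [subHom_zero, quotHom_zero] at key
  calc addHtop χ = addHtop (Prod.map (0 : A → A) χ) := (addHtop_zero_prodMap hχ (map_zero χ)).symm
    _ = addHtop (Prod.map 0 (subHom χ K)) + addHtop (Prod.map 0 (quotHom χ K)) := key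
    _ = addHtop (subHom χ K) + addHtop (quotHom χ K) := by
      rw [addHtop_zero_prodMap (continuous_subHom hχ K) (map_zero _),
        addHtop_zero_prodMap (continuous_quotHom hχ K) (map_zero _)]

end ProductAT

theorem AT_factors_of_AT_prod_general
    (G₁ G₂ : Type*)
    [AddCommGroup G₁] [TopologicalSpace G₁] [IsTopologicalAddGroup G₁]
    [T2Space G₁] [LocallyCompactSpace G₁]
    [AddCommGroup G₂] [TopologicalSpace G₂] [IsTopologicalAddGroup G₂]
    [T2Space G₂] [LocallyCompactSpace G₂]
    (hAT : AT (G₁ × G₂)) :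
    AT G₁ ∧ AT G₂ :=
  ⟨hAT.fst, hAT.snd⟩

/-- Let `G = G₁ × G₂` be a locally compact abelian group where each of
`G₁`, `G₂` is either compact, or totally disconnected, or topologically isomorphic to
`ℝ^n`. If `AT(G)` holds, then `AT(G₁)` and `AT(G₂)` hold. -/
theorem AT_factors_of_AT_prod
    (G₁ G₂ : Type*)
    [AddCommGroup G₁] [TopologicalSpace G₁] [IsTopologicalAddGroup G₁]
    [T2Space G₁] [LocallyCompactSpace G₁]
    [AddCommGroup G₂] [TopologicalSpace G₂] [IsTopologicalAddGroup G₂]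
    [T2Space G₂] [LocallyCompactSpace G₂]
    (h₁ : CompactSpace G₁ ∨ TotallyDisconnectedSpace G₁ ∨
      ∃ n : ℕ, ∃ e : G₁ ≃+ (Fin n → ℝ), Continuous e ∧ Continuous e.symm)
    (h₂ : CompactSpace G₂ ∨ TotallyDisconnectedSpace G₂ ∨
      ∃ n : ℕ, ∃ e : G₂ ≃+ (Fin n → ℝ), Continuous e ∧ Continuous e.symm)
    (hAT : AT (G₁ × G₂)) :
    AT G₁ ∧ AT G₂ :=
  AT_factors_of_AT_prod_general G₁ G₂ hAT
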